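/- arXiv:1706.05532 — 3 statements merged into one kernel-verified Lean document; each statement's English description precedes it below -/
import Mathlib

section
/- A Hermitian operator W on the total Hilbert space of parties A, B, C, ... (each party X having an input system x₁ and an output system x₂) that is positive semidefinite and has trace equal to d_O (the product of the output dimensions) yields normalized outcome probabilities — i.e., Tr[W (M^A ⊗ M^B ⊗ ⋯)] = 1 for every choice of Choi matrices M^X of completely positive trace-preserving maps from x₁ to x₂ (i.e., M^X positive semidefinite with partial trace over x₂ equal to the identity on x₁) — if and only if, in its Hilbert–Schmidt expansion, every nonzero nontrivial term is of type a₁ on some party A, i.e., there is a party on which the term acts nontrivially on the input system and trivially (as identity) on the output system. -/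
/-!
Expanding `W` in the product Hilbert–Schmidt basis gives
`Tr[W (M^A ⊗ M^B ⊗ ⋯)] = ∑_t w_t ∏_X Tr[(σ_{t_X}) M^X]`. If every nontrivial term has a party of
type `a₁`, the condition `Tr_{x₂} M^X = 𝟙` kills that party's factor, so only the identity term
survives, and its coefficient is fixed by `Tr W = d_O`.

Conversely, every Hermitian `X` with `Tr_{x₂} X = r 𝟙` is an affine combination, with weights
summing to `r`, of the two Choi matrices `(𝟙 ± ε (X - (r/d) 𝟙)) / d`; by multilinearity the
normalization therefore gives `∏_X r_X` on products of such operators. For a term `t` with no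
party of type `a₁`, each local factor `σ_{t_X}` is of this kind, with `r_X = 0` on the parties
where `t` acts nontrivially on the output (there is one, as `t` is nontrivial), while by
orthogonality the left-hand side is `w_t ∏_X Tr[σ_{t_X}²]` with every trace nonzero.
Hence `w_t = 0`.
-/

open Matrix Kronecker BigOperators
open scoped ComplexOrder

namespace ProcessPaper

/-- A (generalized) Hilbert–Schmidt basis of operators on a finite-dimensional Hilbert
space with orthonormal basis indexed by `n`: a family of Hermitian matrices indexed by
`ι` (with `Fintype.card ι = (Fintype.card n) ^ 2`), whose distinguished element `σ 0`
is the identity, whose other elements are traceless, which are mutually orthogonal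
under the trace inner product, and which are all nonzero. -/
def IsHSBasis {n : Type*} [Fintype n] [DecidableEq n] {ι : Type*} [Fintype ι] [Zero ι]
    (σ : ι → Matrix n n ℂ) : Prop :=
  Fintype.card ι = (Fintype.card n) ^ 2 ∧
  (∀ i, (σ i).IsHermitian) ∧
  σ 0 = 1 ∧
  (∀ i, i ≠ 0 → (σ i).trace = 0) ∧
  (∀ i j, i ≠ j → (σ i * σ j).trace = 0) ∧
  (∀ i, σ i ≠ 0)

variable {P : Type*} [Fintype P] [DecidableEq P]

section defs

variable {I O : P → Type*} [∀ p, Fintype (I p)] [∀ p, DecidableEq (I p)]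
  [∀ p, Fintype (O p)] [∀ p, DecidableEq (O p)]
  {ιI ιO : P → Type*} [∀ p, Fintype (ιI p)] [∀ p, Zero (ιI p)]
  [∀ p, Fintype (ιO p)] [∀ p, Zero (ιO p)]

/-- The tensor product, over all parties, of party-local operators
(each party `p` carries the Hilbert space of its input system `I p`
tensored with its output system `O p`). -/
def tensorFamily (M : ∀ p, Matrix (I p × O p) (I p × O p) ℂ) :
    Matrix ((p : P) → I p × O p) ((p : P) → I p × O p) ℂ :=
  fun x y => ∏ p, M p (x p) (y p)

/-- The Hilbert–Schmidt basis term with multi-index `t`: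
`⨂_p σI p (t p).1 ⊗ σO p (t p).2`. -/
def hsTerm (σI : ∀ p, ιI p → Matrix (I p) (I p) ℂ)
    (σO : ∀ p, ιO p → Matrix (O p) (O p) ℂ)
    (t : ∀ p, ιI p × ιO p) :
    Matrix ((p : P) → I p × O p) ((p : P) → I p × O p) ℂ :=
  fun x y => ∏ p, σI p (t p).1 (x p).1 (y p).1 * σO p (t p).2 (x p).2 (y p).2

/-- The operator with Hilbert–Schmidt coefficients `w`. -/
noncomputable def expand (σI : ∀ p, ιI p → Matrix (I p) (I p) ℂ)
    (σO : ∀ p, ιO p → Matrix (O p) (O p) ℂ)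
    (w : (∀ p, ιI p × ιO p) → ℝ) :
    Matrix ((p : P) → I p × O p) ((p : P) → I p × O p) ℂ :=
  ∑ t : ∀ p, ιI p × ιO p, (w t : ℂ) • hsTerm σI σO t

end defs

section types

variable {ιI ιO : P → Type*} [∀ p, Zero (ιI p)] [∀ p, Zero (ιO p)]

/-- A term is trivial on party `p` if its indices on both the input and the output
system of `p` are zero (identity factor on party `p`). -/
def TrivialAt (t : ∀ p, ιI p × ιO p) (p : P) : Prop :=
  (t p).1 = 0 ∧ (t p).2 = 0

/-- A term is in type on party `p` if it is nontrivial on the input system of `p`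
and trivial (identity) on the output system of `p`. -/
def InTypeAt (t : ∀ p, ιI p × ιO p) (p : P) : Prop :=
  (t p).1 ≠ 0 ∧ (t p).2 = 0

/-- A term includes the out type on party `p` if it is nontrivial on the output
system of `p`. -/
def IncludesOutAt (t : ∀ p, ιI p × ιO p) (p : P) : Prop :=
  (t p).2 ≠ 0

/-- A term is nontrivial if it is nontrivial on some party
(i.e. it is not the identity term). -/
def NontrivialTerm (t : ∀ p, ιI p × ιO p) : Prop :=
  ∃ p, ¬ TrivialAt t p

/-- The Oreshkov–Giarmatzi condition on Hilbert–Schmidt coefficients: every nonzero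
nontrivial term is in type on at least one party. -/
def OGCoeffs (w : (∀ p, ιI p × ιO p) → ℝ) : Prop :=
  ∀ t, w t ≠ 0 → NontrivialTerm t → ∃ p, InTypeAt t p

end types

section process

variable {I O : P → Type*} [∀ p, Fintype (I p)] [∀ p, DecidableEq (I p)]
  [∀ p, Fintype (O p)] [∀ p, DecidableEq (O p)]
  {ιI ιO : P → Type*} [∀ p, Fintype (ιI p)] [∀ p, Zero (ιI p)]
  [∀ p, Fintype (ιO p)] [∀ p, Zero (ιO p)]

/-- `W` is a valid process with Hilbert–Schmidt coefficients `w` (relative to the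
Hilbert–Schmidt bases `σI`, `σO`): it is positive semidefinite, has trace equal to the
product `d_O` of the output dimensions, has expansion given by `w`, and every nonzero
nontrivial Hilbert–Schmidt term of it is in type on at least one party. -/
def IsProcessWith (σI : ∀ p, ιI p → Matrix (I p) (I p) ℂ)
    (σO : ∀ p, ιO p → Matrix (O p) (O p) ℂ)
    (W : Matrix ((p : P) → I p × O p) ((p : P) → I p × O p) ℂ)
    (w : (∀ p, ιI p × ιO p) → ℝ) : Prop :=
  W.PosSemidef ∧
  W.trace = ∏ p, (Fintype.card (O p) : ℂ) ∧
  W = expand σI σO w ∧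
  OGCoeffs w

/-- `W` is a valid process (relative to the Hilbert–Schmidt bases `σI`, `σO`). -/
def IsProcess (σI : ∀ p, ιI p → Matrix (I p) (I p) ℂ)
    (σO : ∀ p, ιO p → Matrix (O p) (O p) ℂ)
    (W : Matrix ((p : P) → I p × O p) ((p : P) → I p × O p) ℂ) : Prop :=
  ∃ w, IsProcessWith σI σO W w

end process

section product

variable {I' O' I'' O'' : P → Type*}

/-- The tensor product `P = W ⊗ Z` of an operator `W` for parties `A', B', …` and an
operator `Z` for parties `A'', B'', …`, regarded as an operator for the combined
parties `A = A'A''` (input `a₁ = a₁'a₁''`, output `a₂ = a₂'a₂''`), `B = B'B''`, …. -/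
def prodOp (W : Matrix ((p : P) → I' p × O' p) ((p : P) → I' p × O' p) ℂ)
    (Z : Matrix ((p : P) → I'' p × O'' p) ((p : P) → I'' p × O'' p) ℂ) :
    Matrix ((p : P) → (I' p × I'' p) × (O' p × O'' p))
      ((p : P) → (I' p × I'' p) × (O' p × O'' p)) ℂ :=
  fun x y =>
    W (fun p => ((x p).1.1, (x p).2.1)) (fun p => ((y p).1.1, (y p).2.1)) *
    Z (fun p => ((x p).1.2, (x p).2.2)) (fun p => ((y p).1.2, (y p).2.2))

end product

/-- The Hilbert–Schmidt basis of a combined system, consisting of the tensor (Kronecker)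
products of the basis elements of the two subsystems; its distinguished (identity)
element is the product of the two distinguished elements. -/
def prodBasis {n n' ι ι' : Type*} (σ : ι → Matrix n n ℂ) (σ' : ι' → Matrix n' n' ℂ) :
    ι × ι' → Matrix (n × n') (n × n') ℂ :=
  fun i => σ i.1 ⊗ₖ σ' i.2

section coeffs

variable {ιI' ιO' ιI'' ιO'' : P → Type*}

/-- The Hilbert–Schmidt coefficients of a tensor product `W ⊗ Z` in terms of the
coefficients `w` of `W` and `z` of `Z`. -/
def prodCoeffs (w : (∀ p, ιI' p × ιO' p) → ℝ) (z : (∀ p, ιI'' p × ιO'' p) → ℝ) :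
    (∀ p, (ιI' p × ιI'' p) × (ιO' p × ιO'' p)) → ℝ :=
  fun u => w (fun p => ((u p).1.1, (u p).2.1)) * z (fun p => ((u p).1.2, (u p).2.2))

/-- The multi-index of the tensor product of the term `t` of `W` and the term `s`
of `Z`, as a term for the combined parties. -/
def combineTerm (t : ∀ p, ιI' p × ιO' p) (s : ∀ p, ιI'' p × ιO'' p) :
    ∀ p, (ιI' p × ιI'' p) × (ιO' p × ιO'' p) :=
  fun p => (((t p).1, (s p).1), ((t p).2, (s p).2))

end coeffs

section twoparty

variable {ιI ιO : Fin 2 → Type*} [∀ p, Zero (ιI p)] [∀ p, Zero (ιO p)]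

/-- For two parties `A` (party `0`) and `B` (party `1`), an `A` to `B` signalling
term: a term of type `a₂b₁` or `a₁a₂b₁`, i.e. nontrivial on `a₂` and on `b₁` and
trivial on `b₂`. -/
def AtoBSig (t : ∀ p, ιI p × ιO p) : Prop :=
  (t 0).2 ≠ 0 ∧ (t 1).1 ≠ 0 ∧ (t 1).2 = 0

/-- A `B` to `A` signalling term: a term of type `a₁b₂` or `a₁b₁b₂`, i.e. nontrivial
on `b₂` and on `a₁` and trivial on `a₂`. -/
def BtoASig (t : ∀ p, ιI p × ιO p) : Prop :=
  (t 1).2 ≠ 0 ∧ (t 0).1 ≠ 0 ∧ (t 0).2 = 0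

end twoparty

section Statement0

variable {P : Type*} [Fintype P] [DecidableEq P]
  {I O : P → Type*} [∀ p, Fintype (I p)] [∀ p, DecidableEq (I p)]
  [∀ p, Fintype (O p)] [∀ p, DecidableEq (O p)]
  {ιI ιO : P → Type*} [∀ p, Fintype (ιI p)] [∀ p, Zero (ιI p)]
  [∀ p, Fintype (ιO p)] [∀ p, Zero (ιO p)]

/-- `M` is the Choi matrix of a completely positive trace-preserving map from the
input system `n` to the output system `m`: it is positive semidefinite and its
partial trace over the output system is the identity on the input system. -/
def IsCPTPChoi {n m : Type*} [Fintype n] [DecidableEq n] [Fintype m]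
    (M : Matrix (n × m) (n × m) ℂ) : Prop :=
  M.PosSemidef ∧ ∀ i j, (∑ o : m, M (i, o) (j, o)) = (1 : Matrix n n ℂ) i j

end Statement0

section PartialTrace

variable {n m R : Type*} [Fintype m] [CommSemiring R]

def partialTraceRight : Matrix (n × m) (n × m) R →ₗ[R] Matrix n n R where
  toFun M := Matrix.of fun i j => ∑ o, M (i, o) (j, o)
  map_add' M N := by ext; simp [Finset.sum_add_distrib]
  map_smul' c M := by ext; simp [Finset.mul_sum]

@[simp]
theorem partialTraceRight_apply (M : Matrix (n × m) (n × m) R) (i j : n) :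
    partialTraceRight M i j = ∑ o, M (i, o) (j, o) := rfl

theorem partialTraceRight_kronecker (A : Matrix n n R) (B : Matrix m m R) :
    partialTraceRight (A ⊗ₖ B) = B.trace • A := by
  ext i j
  simp [Matrix.trace, Finset.mul_sum, mul_comm]

theorem partialTraceRight_one [DecidableEq n] [DecidableEq m] :
    partialTraceRight (1 : Matrix (n × m) (n × m) R) = (Fintype.card m : R) • 1 := by
  rw [← one_kronecker_one, partialTraceRight_kronecker, trace_one]

theorem trace_kronecker_one_mul [Fintype n] [DecidableEq m] (A : Matrix n n R)
    (M : Matrix (n × m) (n × m) R) :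
    ((A ⊗ₖ (1 : Matrix m m R)) * M).trace = (A * partialTraceRight M).trace := by
  simp only [trace, diag_apply, mul_apply, kroneckerMap_apply, Fintype.sum_prod_type,
    one_apply, mul_ite, mul_one, mul_zero, ite_mul, zero_mul, Finset.sum_ite_eq,
    Finset.mem_univ, if_true, partialTraceRight_apply, Finset.mul_sum]
  exact Finset.sum_congr rfl fun _ _ => Finset.sum_comm

end PartialTrace

theorem isCPTPChoi_iff {n m : Type*} [Fintype n] [DecidableEq n] [Fintype m]
    (M : Matrix (n × m) (n × m) ℂ) :
    IsCPTPChoi M ↔ M.PosSemidef ∧ partialTraceRight M = 1 := by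
  simp [IsCPTPChoi, ← Matrix.ext_iff]

section HSBasis

variable {n ι : Type*} [Fintype n] [DecidableEq n] [Fintype ι] [Zero ι] {σ : ι → Matrix n n ℂ}

theorem IsHSBasis.isHermitian (hσ : IsHSBasis σ) (i : ι) : (σ i).IsHermitian := hσ.2.1 i

theorem IsHSBasis.eq_one (hσ : IsHSBasis σ) : σ 0 = 1 := hσ.2.2.1

theorem IsHSBasis.trace_eq_zero (hσ : IsHSBasis σ) {i : ι} (hi : i ≠ 0) : (σ i).trace = 0 :=
  hσ.2.2.2.1 i hi

theorem IsHSBasis.trace_mul_eq_zero (hσ : IsHSBasis σ) {i j : ι} (hij : i ≠ j) :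
    (σ i * σ j).trace = 0 :=
  hσ.2.2.2.2.1 i j hij

theorem IsHSBasis.trace_mul_self_ne_zero (hσ : IsHSBasis σ) (i : ι) : (σ i * σ i).trace ≠ 0 := by
  conv_lhs => enter [1, 1]; rw [← (hσ.isHermitian i).eq]
  exact trace_conjTranspose_mul_self_eq_zero_iff.not.mpr (hσ.2.2.2.2.2 i)

theorem IsHSBasis.nonempty (hσ : IsHSBasis σ) : Nonempty n := by
  by_contra! h
  exact hσ.2.2.2.2.2 0 (Subsingleton.elim _ _)

end HSBasis

theorem IsHSBasis.prod {n n' ι ι' : Type*} [Fintype n] [DecidableEq n] [Fintype n']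
    [DecidableEq n'] [Fintype ι] [Zero ι] [Fintype ι'] [Zero ι'] {σ : ι → Matrix n n ℂ}
    {τ : ι' → Matrix n' n' ℂ} (hσ : IsHSBasis σ) (hτ : IsHSBasis τ) :
    IsHSBasis (prodBasis σ τ) := by
  have htrace_mul : ∀ i j, (prodBasis σ τ i * prodBasis σ τ j).trace
      = (σ i.1 * σ j.1).trace * (τ i.2 * τ j.2).trace := fun i j => by
    rw [prodBasis, prodBasis, ← mul_kronecker_mul, trace_kronecker]
  refine ⟨by simp [hσ.1, hτ.1, mul_pow], fun i => ?_, ?_, fun i hi => ?_, fun i j hij => ?_,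
    fun i hi => ?_⟩
  · rw [IsHermitian, prodBasis, conjTranspose_kronecker, (hσ.isHermitian _).eq,
      (hτ.isHermitian _).eq]
  · rw [prodBasis, Prod.fst_zero, Prod.snd_zero, hσ.eq_one, hτ.eq_one, one_kronecker_one]
  · rw [prodBasis, trace_kronecker]
    by_cases h1 : i.1 = 0
    · rw [hτ.trace_eq_zero fun h2 => hi (Prod.ext h1 h2), mul_zero]
    · rw [hσ.trace_eq_zero h1, zero_mul]
  · rw [htrace_mul]
    by_cases h1 : i.1 = j.1
    · rw [hτ.trace_mul_eq_zero fun h2 => hij (Prod.ext h1 h2), mul_zero]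
    · rw [hσ.trace_mul_eq_zero h1, zero_mul]
  · have := htrace_mul i i
    rw [hi, zero_mul, trace_zero] at this
    exact mul_ne_zero (hσ.trace_mul_self_ne_zero _) (hτ.trace_mul_self_ne_zero _) this.symm

open Unitary in
theorem _root_.Matrix.IsHermitian.exists_posSemidef_one_add_smul {n : Type*} [Fintype n]
    [DecidableEq n] {H : Matrix n n ℂ} (hH : H.IsHermitian) :
    ∃ ε > 0, ∀ δ : ℝ, |δ| ≤ ε → (1 + (δ : ℂ) • H).PosSemidef := by
  set C := ∑ i, |hH.eigenvalues i| + 1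
  have hC : 0 < C := by positivity
  refine ⟨C⁻¹, inv_pos.mpr hC, fun δ hδ => ?_⟩
  have hdiag : 1 + (δ : ℂ) • H = conjStarAlgAut ℂ _ hH.eigenvectorUnitary
      (diagonal fun i => ((1 + δ * hH.eigenvalues i : ℝ) : ℂ)) := by
    conv_lhs => rw [hH.spectral_theorem]
    rw [← map_one (conjStarAlgAut ℂ _ hH.eigenvectorUnitary), ← map_smul, ← map_add]
    congr 1
    ext i j
    by_cases h : i = j <;> simp [one_apply, h]
  rw [hdiag, conjStarAlgAut_apply, star_eq_conjTranspose]
  refine (PosSemidef.diagonal fun i => ?_).mul_mul_conjTranspose_same _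
  have hle : |hH.eigenvalues i| ≤ C :=
    (Finset.single_le_sum (fun j _ => abs_nonneg (hH.eigenvalues j)) (Finset.mem_univ i)).trans
      (le_add_of_nonneg_right zero_le_one)
  have : |δ * hH.eigenvalues i| ≤ 1 := by
    rw [abs_mul]
    calc |δ| * |hH.eigenvalues i| ≤ C⁻¹ * C := by gcongr
      _ = 1 := inv_mul_cancel₀ hC.ne'
  simp only [Pi.zero_apply, Complex.zero_le_real]
  linarith [neg_abs_le (δ * hH.eigenvalues i)]

theorem exists_isCPTPChoi_sum_smul_eq {n m : Type*} [Fintype n] [DecidableEq n] [Fintype m]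
    [DecidableEq m] [Nonempty m] {X : Matrix (n × m) (n × m) ℂ} (hX : X.IsHermitian) {r : ℝ}
    (hr : partialTraceRight X = (r : ℂ) • 1) :
    ∃ (M : Bool → Matrix (n × m) (n × m) ℂ) (c : Bool → ℂ),
      (∀ b, IsCPTPChoi (M b)) ∧ ∑ b, c b = r ∧ ∑ b, c b • M b = X := by
  set d : ℝ := (Fintype.card m : ℝ)
  have hd : d ≠ 0 := (Nat.cast_pos.mpr Fintype.card_pos).ne'
  have hdC : (Fintype.card m : ℂ) = (d : ℂ) := by simp [d]
  set Y := X - ((r / d : ℝ) : ℂ) • 1 with hY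
  have hYh : Y.IsHermitian := hX.sub (isHermitian_one.smul (Complex.conj_ofReal _))
  have hYtr : partialTraceRight Y = 0 := by
    rw [map_sub, map_smul, partialTraceRight_one, hr, smul_smul, hdC, ← Complex.ofReal_mul,
      div_mul_cancel₀ r hd, sub_self]
  obtain ⟨ε, hε, hεY⟩ := hYh.exists_posSemidef_one_add_smul
  set s : Bool → ℝ := fun b => if b then ε else -ε
  refine ⟨fun b => ((d⁻¹ : ℝ) : ℂ) • (1 + (s b : ℂ) • Y),
    fun b => r / 2 + (if b then d / (2 * ε) else -(d / (2 * ε)) : ℝ), fun b => ?_, ?_, ?_⟩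
  · rw [isCPTPChoi_iff]
    refine ⟨(hεY (s b) ?_).smul (by positivity), ?_⟩
    · cases b <;> simp [s, abs_of_pos hε]
    · rw [map_smul, map_add, map_smul, hYtr, partialTraceRight_one, smul_zero, add_zero,
        smul_smul, hdC, ← Complex.ofReal_mul, inv_mul_cancel₀ hd, Complex.ofReal_one, one_smul]
  · simp only [Fintype.sum_bool, if_true, if_false, Bool.false_eq_true]
    push_cast
    ring
  · rw [← sub_add_cancel X (((r / d : ℝ) : ℂ) • 1), ← hY]
    simp only [Fintype.sum_bool, s, if_true, if_false, Bool.false_eq_true]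
    match_scalars <;> field_simp <;> ring

section TensorFamily

variable {P : Type*} [Fintype P] {I O : P → Type*}

theorem hsTerm_eq_tensorFamily {ιI ιO : P → Type*} (σI : ∀ p, ιI p → Matrix (I p) (I p) ℂ)
    (σO : ∀ p, ιO p → Matrix (O p) (O p) ℂ) (t : ∀ p, ιI p × ιO p) :
    hsTerm σI σO t = tensorFamily fun p => prodBasis (σI p) (σO p) (t p) :=
  rfl

theorem tensorFamily_one [∀ p, DecidableEq (I p)] [∀ p, DecidableEq (O p)] :
    tensorFamily (fun p => (1 : Matrix (I p × O p) (I p × O p) ℂ)) = 1 := by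
  ext x y
  simp only [tensorFamily, one_apply, Fintype.prod_boole, funext_iff]

variable [DecidableEq P]

theorem tensorFamily_sum_smul {β : Type*} [Fintype β] (c : P → β → ℂ)
    (M : ∀ p, β → Matrix (I p × O p) (I p × O p) ℂ) :
    tensorFamily (fun p => ∑ b, c p b • M p b)
      = ∑ η : P → β, (∏ p, c p (η p)) • tensorFamily fun p => M p (η p) := by
  ext x y
  simp only [tensorFamily, Matrix.sum_apply, Matrix.smul_apply, smul_eq_mul, Fintype.prod_sum,
    Finset.prod_mul_distrib]

variable [∀ p, Fintype (I p)] [∀ p, Fintype (O p)]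

theorem tensorFamily_mul (A B : ∀ p, Matrix (I p × O p) (I p × O p) ℂ) :
    tensorFamily A * tensorFamily B = tensorFamily fun p => A p * B p := by
  ext x y
  simp only [mul_apply, tensorFamily, ← Finset.prod_mul_distrib]
  exact (Fintype.prod_sum fun p z => A p (x p) z * B p z (y p)).symm

theorem trace_tensorFamily (A : ∀ p, Matrix (I p × O p) (I p × O p) ℂ) :
    (tensorFamily A).trace = ∏ p, (A p).trace := by
  simp only [trace, diag_apply, tensorFamily]
  exact (Fintype.prod_sum fun p z => A p z z).symm

theorem trace_expand_mul_tensorFamily {ιI ιO : P → Type*} [∀ p, Fintype (ιI p)]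
    [∀ p, Fintype (ιO p)] (σI : ∀ p, ιI p → Matrix (I p) (I p) ℂ)
    (σO : ∀ p, ιO p → Matrix (O p) (O p) ℂ) (w : (∀ p, ιI p × ιO p) → ℝ)
    (M : ∀ p, Matrix (I p × O p) (I p × O p) ℂ) :
    (expand σI σO w * tensorFamily M).trace
      = ∑ t, (w t : ℂ) * ∏ p, (prodBasis (σI p) (σO p) (t p) * M p).trace := by
  simp only [expand, Matrix.sum_mul, trace_sum, smul_mul, trace_smul, smul_eq_mul,
    hsTerm_eq_tensorFamily, tensorFamily_mul, trace_tensorFamily]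

end TensorFamily

section Normalized

variable {P : Type*} [Fintype P] [DecidableEq P] {I O : P → Type*} [∀ p, Fintype (I p)]
  [∀ p, DecidableEq (I p)] [∀ p, Fintype (O p)] [∀ p, DecidableEq (O p)]

theorem trace_mul_tensorFamily_eq_prod [∀ p, Nonempty (O p)]
    {W : Matrix ((p : P) → I p × O p) ((p : P) → I p × O p) ℂ}
    (hW : ∀ M : ∀ p, Matrix (I p × O p) (I p × O p) ℂ,
      (∀ p, IsCPTPChoi (M p)) → (W * tensorFamily M).trace = 1)
    {X : ∀ p, Matrix (I p × O p) (I p × O p) ℂ} (hX : ∀ p, (X p).IsHermitian) (r : P → ℝ)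
    (hr : ∀ p, partialTraceRight (X p) = (r p : ℂ) • 1) :
    (W * tensorFamily X).trace = ∏ p, (r p : ℂ) := by
  choose M c hM hc hMX using fun p => exists_isCPTPChoi_sum_smul_eq (hX p) (hr p)
  rw [show X = fun p => ∑ b, c p b • M p b from funext fun p => (hMX p).symm,
    tensorFamily_sum_smul, Matrix.mul_sum, trace_sum]
  simp only [Matrix.mul_smul, trace_smul, hW _ fun p => hM p _, smul_eq_mul, mul_one]
  rw [← Fintype.prod_sum]
  exact Finset.prod_congr rfl fun p _ => hc p

end Normalized

section Expansion

variable {P : Type*} [Fintype P] [DecidableEq P] {I O : P → Type*} [∀ p, Fintype (I p)]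
  [∀ p, DecidableEq (I p)] [∀ p, Fintype (O p)] [∀ p, DecidableEq (O p)]
  {ιI ιO : P → Type*} [∀ p, Fintype (ιI p)] [∀ p, Zero (ιI p)]
  [∀ p, Fintype (ιO p)] [∀ p, Zero (ιO p)]
  {σI : ∀ p, ιI p → Matrix (I p) (I p) ℂ} {σO : ∀ p, ιO p → Matrix (O p) (O p) ℂ}

theorem trace_expand_mul_hsTerm (hσI : ∀ p, IsHSBasis (σI p)) (hσO : ∀ p, IsHSBasis (σO p))
    (w : (∀ p, ιI p × ιO p) → ℝ) (t : ∀ p, ιI p × ιO p) :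
    (expand σI σO w * hsTerm σI σO t).trace
      = w t * ∏ p, (prodBasis (σI p) (σO p) (t p) * prodBasis (σI p) (σO p) (t p)).trace := by
  rw [hsTerm_eq_tensorFamily, trace_expand_mul_tensorFamily]
  refine Fintype.sum_eq_single t fun s hs => ?_
  obtain ⟨p, hp⟩ := Function.ne_iff.mp hs
  rw [Finset.prod_eq_zero (Finset.mem_univ p) (((hσI p).prod (hσO p)).trace_mul_eq_zero hp),
    mul_zero]

theorem trace_expand (hσI : ∀ p, IsHSBasis (σI p)) (hσO : ∀ p, IsHSBasis (σO p))
    (w : (∀ p, ιI p × ιO p) → ℝ) :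
    (expand σI σO w).trace = w 0 * ∏ p, ((Fintype.card (I p) : ℂ) * Fintype.card (O p)) := by
  have hone : hsTerm σI σO 0 = 1 := by
    rw [hsTerm_eq_tensorFamily, ← tensorFamily_one]
    exact congrArg tensorFamily (funext fun p => ((hσI p).prod (hσO p)).eq_one)
  rw [← mul_one (expand σI σO w), ← hone, trace_expand_mul_hsTerm hσI hσO]
  congr 1
  refine Finset.prod_congr rfl fun p _ => ?_
  rw [show (0 : ∀ p, ιI p × ιO p) p = 0 from rfl, ((hσI p).prod (hσO p)).eq_one, mul_one,
    trace_one, Fintype.card_prod, Nat.cast_mul]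

theorem OGCoeffs.of_trace_mul_tensorFamily_eq_one (hσI : ∀ p, IsHSBasis (σI p))
    (hσO : ∀ p, IsHSBasis (σO p)) {w : (∀ p, ιI p × ιO p) → ℝ}
    (hw : ∀ M : ∀ p, Matrix (I p × O p) (I p × O p) ℂ,
      (∀ p, IsCPTPChoi (M p)) → (expand σI σO w * tensorFamily M).trace = 1) :
    OGCoeffs w := by
  classical
  intro t hwt ⟨p₀, hp₀⟩
  by_contra! hno
  have hin : ∀ p, (t p).2 = 0 → (t p).1 = 0 := fun p h2 => not_not.mp fun h1 => hno p ⟨h1, h2⟩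
  have hout : (t p₀).2 ≠ 0 := fun h2 => hp₀ ⟨hin p₀ h2, h2⟩
  have (p : P) : Nonempty (O p) := (hσO p).nonempty
  set r : P → ℝ := fun p => if (t p).2 = 0 then Fintype.card (O p) else 0
  have hr : ∀ p, partialTraceRight (prodBasis (σI p) (σO p) (t p)) = (r p : ℂ) • 1 := by
    intro p
    rw [prodBasis, partialTraceRight_kronecker]
    by_cases h2 : (t p).2 = 0
    · simp [r, h2, hin p h2, (hσI p).eq_one, (hσO p).eq_one]
    · simp [r, h2, (hσO p).trace_eq_zero h2]
  have key := trace_mul_tensorFamily_eq_prod hw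
    (fun p => ((hσI p).prod (hσO p)).isHermitian (t p)) r hr
  have hr₀ : ∏ p, (r p : ℂ) = 0 := Finset.prod_eq_zero (Finset.mem_univ p₀) (by simp [r, hout])
  rw [← hsTerm_eq_tensorFamily, trace_expand_mul_hsTerm hσI hσO, hr₀] at key
  exact mul_ne_zero (Complex.ofReal_ne_zero.mpr hwt)
    (Finset.prod_ne_zero_iff.mpr fun p _ => ((hσI p).prod (hσO p)).trace_mul_self_ne_zero _) key

theorem trace_expand_mul_tensorFamily_of_OGCoeffs (hσI : ∀ p, IsHSBasis (σI p))
    (hσO : ∀ p, IsHSBasis (σO p)) {w : (∀ p, ιI p × ιO p) → ℝ} (hw : OGCoeffs w)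
    {M : ∀ p, Matrix (I p × O p) (I p × O p) ℂ} (hM : ∀ p, partialTraceRight (M p) = 1) :
    (expand σI σO w * tensorFamily M).trace = w 0 * ∏ p, (Fintype.card (I p) : ℂ) := by
  have hin : ∀ p (a : ιI p), (prodBasis (σI p) (σO p) (a, 0) * M p).trace = (σI p a).trace :=
    fun p a => by rw [prodBasis, (hσO p).eq_one, trace_kronecker_one_mul, hM p, mul_one]
  rw [trace_expand_mul_tensorFamily, Fintype.sum_eq_single 0]
  · exact congrArg _ (Finset.prod_congr rfl fun p _ => by
      rw [show (0 : ∀ p, ιI p × ιO p) p = (0, 0) from rfl, hin, (hσI p).eq_one, trace_one])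
  intro t ht
  by_cases hwt : w t = 0
  · rw [hwt, Complex.ofReal_zero, zero_mul]
  obtain ⟨p, hp1, hp2⟩ := hw t hwt (by simpa [NontrivialTerm, TrivialAt, funext_iff,
    Prod.ext_iff] using ht)
  rw [Finset.prod_eq_zero (Finset.mem_univ p) (by
    rw [show t p = ((t p).1, 0) from Prod.ext rfl hp2, hin, (hσI p).trace_eq_zero hp1]),
    mul_zero]

end Expansion

section Statement0

variable {P : Type*} [Fintype P] [DecidableEq P]
  {I O : P → Type*} [∀ p, Fintype (I p)] [∀ p, DecidableEq (I p)]
  [∀ p, Fintype (O p)] [∀ p, DecidableEq (O p)]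
  {ιI ιO : P → Type*} [∀ p, Fintype (ιI p)] [∀ p, Zero (ιI p)]
  [∀ p, Fintype (ιO p)] [∀ p, Zero (ιO p)]

theorem statement0_general
    (σI : ∀ p, ιI p → Matrix (I p) (I p) ℂ) (σO : ∀ p, ιO p → Matrix (O p) (O p) ℂ)
    (hσI : ∀ p, IsHSBasis (σI p)) (hσO : ∀ p, IsHSBasis (σO p))
    (W : Matrix ((p : P) → I p × O p) ((p : P) → I p × O p) ℂ)
    (w : (∀ p, ιI p × ιO p) → ℝ)
    (hexp : W = expand σI σO w)
    (htr : W.trace = ∏ p, (Fintype.card (O p) : ℂ)) :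
    (∀ M : ∀ p, Matrix (I p × O p) (I p × O p) ℂ,
        (∀ p, IsCPTPChoi (M p)) → (W * tensorFamily M).trace = 1)
      ↔ OGCoeffs w := by
  subst hexp
  have (p : P) : Nonempty (O p) := (hσO p).nonempty
  have hw₀ : (w 0 : ℂ) * ∏ p, (Fintype.card (I p) : ℂ) = 1 := by
    rw [trace_expand hσI hσO, Finset.prod_mul_distrib, ← mul_assoc] at htr
    exact mul_right_cancel₀ (Finset.prod_ne_zero_iff.mpr fun p _ => by simp)
      (htr.trans (one_mul _).symm)
  refine ⟨OGCoeffs.of_trace_mul_tensorFamily_eq_one hσI hσO, fun hw M hM => ?_⟩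
  rw [trace_expand_mul_tensorFamily_of_OGCoeffs hσI hσO hw
    fun p => ((isCPTPChoi_iff _).mp (hM p)).2, hw₀]

/-- **Proposition 1 (Oreshkov–Giarmatzi).** A Hermitian operator `W` on the total
Hilbert space of the parties (given by its Hilbert–Schmidt expansion with real
coefficients `w`) that is positive semidefinite and has trace `d_O` (the product of
the output dimensions) yields normalized outcome probabilities—i.e.
`Tr[W (M^A ⊗ M^B ⊗ ⋯)] = 1` for every choice of Choi matrices `M^X` of CPTP maps
from the input to the output of each party—if and only if every nonzero nontrivial
term of its Hilbert–Schmidt expansion is of type `a₁` on some party `A`, that is,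
in type (nontrivial on the input system and identity on the output system) on at
least one party. -/
theorem statement0
    (σI : ∀ p, ιI p → Matrix (I p) (I p) ℂ) (σO : ∀ p, ιO p → Matrix (O p) (O p) ℂ)
    (hσI : ∀ p, IsHSBasis (σI p)) (hσO : ∀ p, IsHSBasis (σO p))
    (W : Matrix ((p : P) → I p × O p) ((p : P) → I p × O p) ℂ)
    (w : (∀ p, ιI p × ιO p) → ℝ)
    (hexp : W = expand σI σO w)
    (hpsd : W.PosSemidef)
    (htr : W.trace = ∏ p, (Fintype.card (O p) : ℂ)) :
    (∀ M : ∀ p, Matrix (I p × O p) (I p × O p) ℂ,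
        (∀ p, IsCPTPChoi (M p)) → (W * tensorFamily M).trace = 1)
      ↔ OGCoeffs w :=
  statement0_general σI σO hσI hσO W w hexp htr

end Statement0

end ProcessPaper
end

section
/- (Sufficiency direction of the product condition.) Let W and Z be processes on parties A', B', ... and A'', B'', ... respectively, and let there exist a nonzero nontrivial Hilbert–Schmidt term of W and a nonzero nontrivial Hilbert–Schmidt term of Z such that on every combined party where one term is trivial the other is trivial or includes the out type, and on every combined party where one term is the in type the other includes the out type. Then the tensor product of these two terms is a nontrivial Hilbert–Schmidt term of P = W ⊗ Z (with nonzero coefficient) that is in type on no combined party, and hence P is not a valid process. -/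
open Matrix Kronecker BigOperators
open scoped ComplexOrder

namespace ProcessPaper

variable {P : Type*} [Fintype P] [DecidableEq P]

variable {P : Type*} [Fintype P] [DecidableEq P]
  {I' O' I'' O'' : P → Type*}
  [∀ p, Fintype (I' p)] [∀ p, DecidableEq (I' p)]
  [∀ p, Fintype (O' p)] [∀ p, DecidableEq (O' p)]
  [∀ p, Fintype (I'' p)] [∀ p, DecidableEq (I'' p)]
  [∀ p, Fintype (O'' p)] [∀ p, DecidableEq (O'' p)]
  {ιI' ιO' ιI'' ιO'' : P → Type*}
  [∀ p, Fintype (ιI' p)] [∀ p, Zero (ιI' p)]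
  [∀ p, Fintype (ιO' p)] [∀ p, Zero (ιO' p)]
  [∀ p, Fintype (ιI'' p)] [∀ p, Zero (ιI'' p)]
  [∀ p, Fintype (ιO'' p)] [∀ p, Zero (ιO'' p)]

section Aux

variable {Q : Type*} [Fintype Q] [DecidableEq Q]

/-- Self trace of a Hilbert–Schmidt basis element is nonzero. -/
lemma IsHSBasis.trace_self_ne_zero {n ι : Type*} [Fintype n] [DecidableEq n]
    [Fintype ι] [Zero ι] {σ : ι → Matrix n n ℂ} (h : IsHSBasis σ) (i : ι) :
    (σ i * σ i).trace ≠ 0 := by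
  have herm := h.2.1 i
  have hne := h.2.2.2.2.2 i
  have hcalc : (σ i * σ i).trace = ∑ a, ∑ b, (Complex.normSq (σ i a b) : ℂ) := by
    simp only [Matrix.trace, Matrix.diag, Matrix.mul_apply]
    refine Finset.sum_congr rfl fun a _ => Finset.sum_congr rfl fun b _ => ?_
    rw [← herm.apply b a]
    exact Complex.mul_conj _
  rw [hcalc]
  intro h0
  apply hne
  have h0' : ∑ a, ∑ b, Complex.normSq (σ i a b) = 0 := by
    have := congrArg Complex.re h0
    simpa using this
  ext a b
  have hnonneg : ∀ a ∈ Finset.univ, (0:ℝ) ≤ ∑ b, Complex.normSq (σ i a b) :=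
    fun a _ => Finset.sum_nonneg fun b _ => Complex.normSq_nonneg _
  have h1 := (Finset.sum_eq_zero_iff_of_nonneg hnonneg).mp h0' a (Finset.mem_univ a)
  have h2 := (Finset.sum_eq_zero_iff_of_nonneg
    (fun b _ => Complex.normSq_nonneg (σ i a b))).mp h1 b (Finset.mem_univ b)
  simpa using Complex.normSq_eq_zero.mp h2

lemma sum_pi_prod {α : Q → Type*} [∀ q, Fintype (α q)] (f : ∀ q, α q → ℂ) :
    ∑ x : ∀ q, α q, ∏ q, f q (x q) = ∏ q, ∑ a, f q a :=
  (Fintype.prod_sum f).symm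

variable {I O : Q → Type*} [∀ q, Fintype (I q)] [∀ q, DecidableEq (I q)]
  [∀ q, Fintype (O q)] [∀ q, DecidableEq (O q)]
  {ιI ιO : Q → Type*} [∀ q, Fintype (ιI q)] [∀ q, Zero (ιI q)]
  [∀ q, Fintype (ιO q)] [∀ q, Zero (ιO q)]

lemma sum2_pi_prod {α : Q → Type*} [∀ q, Fintype (α q)] (g : ∀ q, α q → α q → ℂ) :
    ∑ x : ∀ q, α q, ∑ y : ∀ q, α q, ∏ q, g q (x q) (y q) = ∏ q, ∑ a, ∑ b, g q a b := by
  have h1 : ∀ x : ∀ q, α q, (∑ y : ∀ q, α q, ∏ q, g q (x q) (y q))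
      = ∏ q, ∑ b, g q (x q) b := fun x => sum_pi_prod (fun q b => g q (x q) b)
  simp only [h1]
  exact sum_pi_prod (fun q a => ∑ b, g q a b)

lemma trace_hsTerm_mul (σI : ∀ q, ιI q → Matrix (I q) (I q) ℂ)
    (σO : ∀ q, ιO q → Matrix (O q) (O q) ℂ) (t u : ∀ q, ιI q × ιO q) :
    (hsTerm σI σO t * hsTerm σI σO u).trace
      = ∏ q, ((σI q (t q).1 * σI q (u q).1).trace *
          (σO q (t q).2 * σO q (u q).2).trace) := by
  simp only [Matrix.trace, Matrix.diag, Matrix.mul_apply, hsTerm,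
    ← Finset.prod_mul_distrib]
  rw [sum2_pi_prod (α := fun q => I q × O q) (fun q a b => σI q (t q).1 a.1 b.1 * σO q (t q).2 a.2 b.2 *
    (σI q (u q).1 b.1 a.1 * σO q (u q).2 b.2 a.2))]
  refine Finset.prod_congr rfl fun q _ => ?_
  simp only [Fintype.sum_prod_type, Finset.sum_mul_sum]
  refine Finset.sum_congr rfl fun a1 _ => Finset.sum_congr rfl fun a2 _ =>
    Finset.sum_congr rfl fun b1 _ => Finset.sum_congr rfl fun b2 _ => by ring

lemma expand_inj (σI : ∀ q, ιI q → Matrix (I q) (I q) ℂ)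
    (σO : ∀ q, ιO q → Matrix (O q) (O q) ℂ)
    (horthI : ∀ q i j, i ≠ j → (σI q i * σI q j).trace = 0)
    (hselfI : ∀ q i, (σI q i * σI q i).trace ≠ 0)
    (horthO : ∀ q i j, i ≠ j → (σO q i * σO q j).trace = 0)
    (hselfO : ∀ q i, (σO q i * σO q i).trace ≠ 0)
    {v v' : (∀ q, ιI q × ιO q) → ℝ}
    (h : expand σI σO v = expand σI σO v') : v = v' := by
  have key : ∀ (c : (∀ q, ιI q × ιO q) → ℝ) (u : ∀ q, ιI q × ιO q),
      (expand σI σO c * hsTerm σI σO u).trace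
        = (c u : ℂ) * ∏ q, ((σI q (u q).1 * σI q (u q).1).trace *
            (σO q (u q).2 * σO q (u q).2).trace) := by
    intro c u
    rw [expand, Matrix.sum_mul, Matrix.trace_sum]
    simp only [Matrix.smul_mul, Matrix.trace_smul, trace_hsTerm_mul, smul_eq_mul]
    refine Finset.sum_eq_single u (fun b _ hb => ?_) (by simp)
    obtain ⟨q, hq⟩ := Function.ne_iff.mp hb
    refine mul_eq_zero_of_right _ (Finset.prod_eq_zero (Finset.mem_univ q) ?_)
    rcases (not_and_or.mp (fun hc => hq (Prod.ext hc.1 hc.2))) with h1 | h1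
    · exact mul_eq_zero_of_left (horthI q _ _ h1) _
    · exact mul_eq_zero_of_right _ (horthO q _ _ h1)
  funext u
  have hD : (∏ q, ((σI q (u q).1 * σI q (u q).1).trace *
      (σO q (u q).2 * σO q (u q).2).trace)) ≠ 0 :=
    Finset.prod_ne_zero_iff.mpr fun q _ => mul_ne_zero (hselfI q _) (hselfO q _)
  have := key v u
  rw [h, key v' u] at this
  exact_mod_cast mul_right_cancel₀ hD this.symm

variable {ιI' ιO' ιI'' ιO'' : Q → Type*}

/-- Combining a pair of terms is an equivalence. -/
def combineEquiv : ((∀ q, ιI' q × ιO' q) × (∀ q, ιI'' q × ιO'' q)) ≃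
    (∀ q, (ιI' q × ιI'' q) × (ιO' q × ιO'' q)) where
  toFun ts := combineTerm ts.1 ts.2
  invFun u := (fun q => ((u q).1.1, (u q).2.1), fun q => ((u q).1.2, (u q).2.2))
  left_inv ts := rfl
  right_inv u := rfl

variable {I' O' I'' O'' : Q → Type*}
  [∀ q, Fintype (I' q)] [∀ q, DecidableEq (I' q)]
  [∀ q, Fintype (O' q)] [∀ q, DecidableEq (O' q)]
  [∀ q, Fintype (I'' q)] [∀ q, DecidableEq (I'' q)]
  [∀ q, Fintype (O'' q)] [∀ q, DecidableEq (O'' q)]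
  [∀ q, Fintype (ιI' q)] [∀ q, Zero (ιI' q)]
  [∀ q, Fintype (ιO' q)] [∀ q, Zero (ιO' q)]
  [∀ q, Fintype (ιI'' q)] [∀ q, Zero (ιI'' q)]
  [∀ q, Fintype (ιO'' q)] [∀ q, Zero (ιO'' q)]

lemma prodOp_expand (σI' : ∀ q, ιI' q → Matrix (I' q) (I' q) ℂ)
    (σO' : ∀ q, ιO' q → Matrix (O' q) (O' q) ℂ)
    (σI'' : ∀ q, ιI'' q → Matrix (I'' q) (I'' q) ℂ)
    (σO'' : ∀ q, ιO'' q → Matrix (O'' q) (O'' q) ℂ)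
    (w : (∀ q, ιI' q × ιO' q) → ℝ) (z : (∀ q, ιI'' q × ιO'' q) → ℝ) :
    prodOp (expand σI' σO' w) (expand σI'' σO'' z)
      = expand (fun q => prodBasis (σI' q) (σI'' q))
          (fun q => prodBasis (σO' q) (σO'' q)) (prodCoeffs w z) := by
  funext x y
  show (expand σI' σO' w) _ _ * (expand σI'' σO'' z) _ _ = _
  rw [expand, expand, expand]
  simp only [Matrix.sum_apply, Matrix.smul_apply, smul_eq_mul]
  rw [Finset.sum_mul_sum, ← Equiv.sum_comp (combineEquiv
    (ιI' := ιI') (ιO' := ιO') (ιI'' := ιI'') (ιO'' := ιO'')), Fintype.sum_prod_type]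
  refine Finset.sum_congr rfl fun t _ => Finset.sum_congr rfl fun s _ => ?_
  show _ = (prodCoeffs w z (combineTerm t s) : ℂ) * hsTerm _ _ (combineTerm t s) x y
  have hc : (prodCoeffs w z (combineTerm t s) : ℂ) = (w t : ℂ) * (z s : ℂ) := by
    show ((w t * z s : ℝ) : ℂ) = _
    push_cast; ring
  rw [hc, mul_mul_mul_comm]
  congr 1
  simp only [hsTerm, prodBasis, Matrix.kroneckerMap_apply, ← Finset.prod_mul_distrib]
  exact Finset.prod_congr rfl fun q _ => by simp only [combineTerm]; ring

end Aux

section Statement2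

/-- **Sufficiency direction of the product condition.** Let `W` and `Z` be processes on
parties `A', B', …` and `A'', B'', …` respectively (with Hilbert–Schmidt coefficients
`w` and `z`), and let there be a nonzero nontrivial term `t` of `W` and a nonzero
nontrivial term `s` of `Z` such that on every combined party where one term is trivial
the other is trivial or includes the out type, and on every combined party where one
term is the in type the other includes the out type. Then the tensor product of these
two terms is a nontrivial Hilbert–Schmidt term of `P = W ⊗ Z` with nonzero coefficient
that is in type on no combined party, and hence `P` is not a valid process. -/
theorem statement2
    (σI' : ∀ p, ιI' p → Matrix (I' p) (I' p) ℂ)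
    (σO' : ∀ p, ιO' p → Matrix (O' p) (O' p) ℂ)
    (σI'' : ∀ p, ιI'' p → Matrix (I'' p) (I'' p) ℂ)
    (σO'' : ∀ p, ιO'' p → Matrix (O'' p) (O'' p) ℂ)
    (hσI' : ∀ p, IsHSBasis (σI' p)) (hσO' : ∀ p, IsHSBasis (σO' p))
    (hσI'' : ∀ p, IsHSBasis (σI'' p)) (hσO'' : ∀ p, IsHSBasis (σO'' p))
    (W : Matrix ((p : P) → I' p × O' p) ((p : P) → I' p × O' p) ℂ)
    (Z : Matrix ((p : P) → I'' p × O'' p) ((p : P) → I'' p × O'' p) ℂ)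
    (w : (∀ p, ιI' p × ιO' p) → ℝ) (z : (∀ p, ιI'' p × ιO'' p) → ℝ)
    (hW : IsProcessWith σI' σO' W w) (hZ : IsProcessWith σI'' σO'' Z z)
    (t : ∀ p, ιI' p × ιO' p) (s : ∀ p, ιI'' p × ιO'' p)
    (ht : w t ≠ 0) (hs : z s ≠ 0)
    (hnt : NontrivialTerm t) (hns : NontrivialTerm s)
    (hcond1 : ∀ p, (TrivialAt t p → TrivialAt s p ∨ IncludesOutAt s p) ∧
                   (TrivialAt s p → TrivialAt t p ∨ IncludesOutAt t p))
    (hcond2 : ∀ p, (InTypeAt t p → IncludesOutAt s p) ∧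
                   (InTypeAt s p → IncludesOutAt t p)) :
    prodOp W Z = expand (fun p => prodBasis (σI' p) (σI'' p))
        (fun p => prodBasis (σO' p) (σO'' p)) (prodCoeffs w z) ∧
    prodCoeffs w z (combineTerm t s) ≠ 0 ∧
    NontrivialTerm (combineTerm t s) ∧
    (∀ p, ¬ InTypeAt (combineTerm t s) p) ∧
    ¬ IsProcess (fun p => prodBasis (σI' p) (σI'' p))
        (fun p => prodBasis (σO' p) (σO'' p)) (prodOp W Z) := by
  classical
  obtain ⟨hWpsd, hWtr, hWexp, hWog⟩ := hW
  obtain ⟨hZpsd, hZtr, hZexp, hZog⟩ := hZ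
  have h1 : prodOp W Z = expand (fun p => prodBasis (σI' p) (σI'' p))
      (fun p => prodBasis (σO' p) (σO'' p)) (prodCoeffs w z) := by
    rw [hWexp, hZexp]; exact prodOp_expand _ _ _ _ w z
  have h2 : prodCoeffs w z (combineTerm t s) ≠ 0 := by
    show w t * z s ≠ 0
    exact mul_ne_zero ht hs
  have h3 : NontrivialTerm (combineTerm t s) := by
    obtain ⟨p, hp⟩ := hnt
    refine ⟨p, fun hc => hp ?_⟩
    exact ⟨(Prod.mk_eq_zero.mp hc.1).1, (Prod.mk_eq_zero.mp hc.2).1⟩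
  have h4 : ∀ p, ¬ InTypeAt (combineTerm t s) p := by
    intro p hp
    have hp1 := hp.1
    obtain ⟨ht2, hs2⟩ := Prod.mk_eq_zero.mp hp.2
    by_cases htp : (t p).1 = 0
    · by_cases hsp : (s p).1 = 0
      · exact hp1 (Prod.mk_eq_zero.mpr ⟨htp, hsp⟩)
      · exact ((hcond2 p).2 ⟨hsp, hs2⟩) ht2
    · exact ((hcond2 p).1 ⟨htp, ht2⟩) hs2
  refine ⟨h1, h2, h3, h4, ?_⟩
  rintro ⟨v, hv⟩
  have horthI : ∀ p i j, i ≠ j →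
      (prodBasis (σI' p) (σI'' p) i * prodBasis (σI' p) (σI'' p) j).trace = 0 := by
    intro p i j hij
    rw [prodBasis, prodBasis, ← Matrix.mul_kronecker_mul, Matrix.trace_kronecker]
    by_cases h : i.1 = j.1
    · exact mul_eq_zero_of_right _
        ((hσI'' p).2.2.2.2.1 _ _ (fun h2 => hij (Prod.ext h h2)))
    · exact mul_eq_zero_of_left ((hσI' p).2.2.2.2.1 _ _ h) _
  have horthO : ∀ p i j, i ≠ j →
      (prodBasis (σO' p) (σO'' p) i * prodBasis (σO' p) (σO'' p) j).trace = 0 := by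
    intro p i j hij
    rw [prodBasis, prodBasis, ← Matrix.mul_kronecker_mul, Matrix.trace_kronecker]
    by_cases h : i.1 = j.1
    · exact mul_eq_zero_of_right _
        ((hσO'' p).2.2.2.2.1 _ _ (fun h2 => hij (Prod.ext h h2)))
    · exact mul_eq_zero_of_left ((hσO' p).2.2.2.2.1 _ _ h) _
  have hselfI : ∀ p i,
      (prodBasis (σI' p) (σI'' p) i * prodBasis (σI' p) (σI'' p) i).trace ≠ 0 := by
    intro p i
    rw [prodBasis, ← Matrix.mul_kronecker_mul, Matrix.trace_kronecker]
    exact mul_ne_zero ((hσI' p).trace_self_ne_zero i.1) ((hσI'' p).trace_self_ne_zero i.2)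
  have hselfO : ∀ p i,
      (prodBasis (σO' p) (σO'' p) i * prodBasis (σO' p) (σO'' p) i).trace ≠ 0 := by
    intro p i
    rw [prodBasis, ← Matrix.mul_kronecker_mul, Matrix.trace_kronecker]
    exact mul_ne_zero ((hσO' p).trace_self_ne_zero i.1) ((hσO'' p).trace_self_ne_zero i.2)
  have hveq : v = prodCoeffs w z :=
    expand_inj _ _ horthI hselfI horthO hselfO (by rw [← hv.2.2.1, h1])
  obtain ⟨p, hp⟩ := hv.2.2.2 (combineTerm t s) (by rw [hveq]; exact h2) h3
  exact h4 p hp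

end Statement2

end ProcessPaper
end

section
/- (Necessity direction of the two-party corollary.) Let W and Z be two-party processes on parties A', B' and A'', B'' respectively such that P = W ⊗ Z is not a valid process for the combined parties A = A'A'', B = B'B''. Then there exist a nonzero nontrivial term of W and a nonzero nontrivial term of Z which are signalling terms of opposite directions; in particular both W and Z contain signalling terms, and the terms of W and Z put together contain signalling terms of both directions. -/
open Matrix Kronecker BigOperators
open scoped ComplexOrder

namespace ProcessPaper

variable {P : Type*} [Fintype P] [DecidableEq P]

/-!
The tensor product `W ⊗ Z` is positive semidefinite, has the right trace, and its
Hilbert–Schmidt coefficients are the products `w t * z s`. So if it is not a valid process,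
some nonzero nontrivial product term `t ⊗ s` is in type on no party. Then `t` and `s` are
both nontrivial, hence in type on some parties `p` and `q`. On `p` the product term would
still be in type unless `s` acts nontrivially on the output of `p`, and symmetrically `t` on
the output of `q`; so `p ≠ q`, and for two parties this makes `t` and `s` signalling terms
of opposite directions.
-/

lemma trace_submatrix_equiv {m n R : Type*} [Fintype m] [Fintype n] [AddCommMonoid R]
    (A : Matrix n n R) (e : m ≃ n) : (A.submatrix e e).trace = A.trace :=
  e.sum_comp fun i => A i i

section tensor

-- A fresh `P`: the instances on the ambient `P` are then not included in the lemmas.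
variable {P : Type*} {I' O' I'' O'' : P → Type*} {ιI' ιO' ιI'' ιO'' : P → Type*}

def splitEquiv {α β γ δ : P → Type*} :
    ((p : P) → (α p × β p) × (γ p × δ p)) ≃ ((∀ p, α p × γ p) × (∀ p, β p × δ p)) where
  toFun x := (fun p => ((x p).1.1, (x p).2.1), fun p => ((x p).1.2, (x p).2.2))
  invFun y := fun p => (((y.1 p).1, (y.2 p).1), ((y.1 p).2, (y.2 p).2))
  left_inv _ := rfl
  right_inv _ := rfl

lemma prodOp_eq_submatrix_kronecker
    (W : Matrix ((p : P) → I' p × O' p) ((p : P) → I' p × O' p) ℂ)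
    (Z : Matrix ((p : P) → I'' p × O'' p) ((p : P) → I'' p × O'' p) ℂ) :
    prodOp W Z = (W ⊗ₖ Z).submatrix splitEquiv splitEquiv :=
  rfl

variable [Fintype P]

lemma hsTerm_combineTerm (σI' : ∀ p, ιI' p → Matrix (I' p) (I' p) ℂ)
    (σO' : ∀ p, ιO' p → Matrix (O' p) (O' p) ℂ) (σI'' : ∀ p, ιI'' p → Matrix (I'' p) (I'' p) ℂ)
    (σO'' : ∀ p, ιO'' p → Matrix (O'' p) (O'' p) ℂ)
    (t : ∀ p, ιI' p × ιO' p) (s : ∀ p, ιI'' p × ιO'' p) :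
    hsTerm (fun p => prodBasis (σI' p) (σI'' p)) (fun p => prodBasis (σO' p) (σO'' p))
        (combineTerm t s) =
      (hsTerm σI' σO' t ⊗ₖ hsTerm σI'' σO'' s).submatrix splitEquiv splitEquiv := by
  ext x y
  simp only [hsTerm, prodBasis, combineTerm, submatrix_apply, kroneckerMap_apply,
    ← Finset.prod_mul_distrib]
  exact Finset.prod_congr rfl fun p _ => mul_mul_mul_comm _ _ _ _

lemma posSemidef_prodOp [∀ p, Fintype (I' p)] [∀ p, Fintype (O' p)] [∀ p, Fintype (I'' p)]
    [∀ p, Fintype (O'' p)]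
    {W : Matrix ((p : P) → I' p × O' p) ((p : P) → I' p × O' p) ℂ}
    {Z : Matrix ((p : P) → I'' p × O'' p) ((p : P) → I'' p × O'' p) ℂ}
    (hW : W.PosSemidef) (hZ : Z.PosSemidef) : (prodOp W Z).PosSemidef := by
  rw [prodOp_eq_submatrix_kronecker]
  exact (hW.kronecker hZ).submatrix _

variable [DecidableEq P]
  [∀ p, Fintype (ιI' p)] [∀ p, Fintype (ιO' p)] [∀ p, Fintype (ιI'' p)] [∀ p, Fintype (ιO'' p)]

lemma expand_prodCoeffs (σI' : ∀ p, ιI' p → Matrix (I' p) (I' p) ℂ)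
    (σO' : ∀ p, ιO' p → Matrix (O' p) (O' p) ℂ) (σI'' : ∀ p, ιI'' p → Matrix (I'' p) (I'' p) ℂ)
    (σO'' : ∀ p, ιO'' p → Matrix (O'' p) (O'' p) ℂ)
    (w : (∀ p, ιI' p × ιO' p) → ℝ) (z : (∀ p, ιI'' p × ιO'' p) → ℝ) :
    expand (fun p => prodBasis (σI' p) (σI'' p)) (fun p => prodBasis (σO' p) (σO'' p))
        (prodCoeffs w z) =
      prodOp (expand σI' σO' w) (expand σI'' σO'' z) := by
  rw [expand, ← splitEquiv.symm.sum_comp, Fintype.sum_prod_type]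
  ext x y
  simp only [prodOp, expand, Matrix.sum_apply, Matrix.smul_apply, smul_eq_mul,
    Finset.sum_mul_sum]
  refine Finset.sum_congr rfl fun t _ => Finset.sum_congr rfl fun s _ => ?_
  rw [show splitEquiv.symm (t, s) = combineTerm t s from rfl, hsTerm_combineTerm]
  simp only [prodCoeffs, combineTerm, submatrix_apply, kroneckerMap_apply, Complex.ofReal_mul]
  rw [mul_mul_mul_comm]
  rfl

variable [∀ p, Fintype (I' p)] [∀ p, Fintype (O' p)] [∀ p, Fintype (I'' p)]
  [∀ p, Fintype (O'' p)]

lemma trace_prodOp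
    (W : Matrix ((p : P) → I' p × O' p) ((p : P) → I' p × O' p) ℂ)
    (Z : Matrix ((p : P) → I'' p × O'' p) ((p : P) → I'' p × O'' p) ℂ) :
    (prodOp W Z).trace = W.trace * Z.trace := by
  rw [prodOp_eq_submatrix_kronecker, trace_submatrix_equiv, trace_kronecker]

variable [∀ p, Zero (ιI' p)] [∀ p, Zero (ιO' p)] [∀ p, Zero (ιI'' p)] [∀ p, Zero (ιO'' p)]

lemma IsProcessWith.prodOp {σI' : ∀ p, ιI' p → Matrix (I' p) (I' p) ℂ}
    {σO' : ∀ p, ιO' p → Matrix (O' p) (O' p) ℂ} {σI'' : ∀ p, ιI'' p → Matrix (I'' p) (I'' p) ℂ}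
    {σO'' : ∀ p, ιO'' p → Matrix (O'' p) (O'' p) ℂ}
    {W : Matrix ((p : P) → I' p × O' p) ((p : P) → I' p × O' p) ℂ}
    {Z : Matrix ((p : P) → I'' p × O'' p) ((p : P) → I'' p × O'' p) ℂ}
    {w : (∀ p, ιI' p × ιO' p) → ℝ} {z : (∀ p, ιI'' p × ιO'' p) → ℝ}
    (hW : IsProcessWith σI' σO' W w) (hZ : IsProcessWith σI'' σO'' Z z)
    (h : OGCoeffs (prodCoeffs w z)) :
    IsProcessWith (fun p => prodBasis (σI' p) (σI'' p)) (fun p => prodBasis (σO' p) (σO'' p))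
      (prodOp W Z) (prodCoeffs w z) := by
  obtain ⟨hWpos, hWtr, rfl, -⟩ := hW
  obtain ⟨hZpos, hZtr, rfl, -⟩ := hZ
  refine ⟨posSemidef_prodOp hWpos hZpos, ?_, (expand_prodCoeffs ..).symm, h⟩
  rw [trace_prodOp, hWtr, hZtr, ← Finset.prod_mul_distrib]
  simp only [Fintype.card_prod, Nat.cast_mul]

end tensor

section terms

variable {P : Type*} {ιI' ιO' ιI'' ιO'' : P → Type*}
  [∀ p, Zero (ιI' p)] [∀ p, Zero (ιO' p)] [∀ p, Zero (ιI'' p)] [∀ p, Zero (ιO'' p)]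
  {t : ∀ p, ιI' p × ιO' p} {s : ∀ p, ιI'' p × ιO'' p} {p : P}

lemma InTypeAt.combineTerm_left (ht : InTypeAt t p) (hs : (s p).2 = 0) :
    InTypeAt (combineTerm t s) p :=
  ⟨fun h => ht.1 (congrArg Prod.fst h), Prod.ext ht.2 hs⟩

lemma InTypeAt.combineTerm_right (ht : (t p).2 = 0) (hs : InTypeAt s p) :
    InTypeAt (combineTerm t s) p :=
  ⟨fun h => hs.1 (congrArg Prod.snd h), Prod.ext ht hs.2⟩

lemma nontrivialTerm_combineTerm_iff :
    NontrivialTerm (combineTerm t s) ↔ NontrivialTerm t ∨ NontrivialTerm s := by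
  simp only [NontrivialTerm, TrivialAt, combineTerm, Prod.mk_eq_zero, ← exists_or]
  exact exists_congr fun p => by tauto

lemma exists_combineTerm_of_not_ogCoeffs_prodCoeffs
    {w : (∀ p, ιI' p × ιO' p) → ℝ} {z : (∀ p, ιI'' p × ιO'' p) → ℝ}
    (h : ¬ OGCoeffs (prodCoeffs w z)) :
    ∃ t s, w t ≠ 0 ∧ z s ≠ 0 ∧ NontrivialTerm (combineTerm t s) ∧
      ∀ p, ¬ InTypeAt (combineTerm t s) p := by
  simp only [OGCoeffs, not_forall, not_exists, exists_prop] at h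
  obtain ⟨u, hu, hnt, hno⟩ := h
  exact ⟨(splitEquiv u).1, (splitEquiv u).2, left_ne_zero_of_mul hu,
    right_ne_zero_of_mul hu, hnt, hno⟩

theorem exists_inTypeAt_includesOutAt_of_combineTerm
    {w : (∀ p, ιI' p × ιO' p) → ℝ} {z : (∀ p, ιI'' p × ιO'' p) → ℝ}
    (hw : OGCoeffs w) (hz : OGCoeffs z) (hwt : w t ≠ 0) (hzs : z s ≠ 0)
    (hts : NontrivialTerm (combineTerm t s)) (hno : ∀ p, ¬ InTypeAt (combineTerm t s) p) :
    NontrivialTerm t ∧ NontrivialTerm s ∧ ∃ p q, InTypeAt t p ∧ InTypeAt s q ∧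
      IncludesOutAt s p ∧ IncludesOutAt t q := by
  have ht : NontrivialTerm t := by
    by_contra ht
    obtain ⟨q, hsq⟩ := hz s hzs ((nontrivialTerm_combineTerm_iff.1 hts).resolve_left ht)
    have htq : TrivialAt t q := not_not.1 fun h => ht ⟨q, h⟩
    exact hno q (InTypeAt.combineTerm_right htq.2 hsq)
  have hs : NontrivialTerm s := by
    by_contra hs
    obtain ⟨p, htp⟩ := hw t hwt ht
    have hsp : TrivialAt s p := not_not.1 fun h => hs ⟨p, h⟩
    exact hno p (htp.combineTerm_left hsp.2)
  obtain ⟨p, htp⟩ := hw t hwt ht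
  obtain ⟨q, hsq⟩ := hz s hzs hs
  exact ⟨ht, hs, p, q, htp, hsq, fun h => hno p (htp.combineTerm_left h),
    fun h => hno q (InTypeAt.combineTerm_right h hsq)⟩

end terms

lemma signalling_of_inTypeAt_includesOutAt {ιI' ιO' ιI'' ιO'' : Fin 2 → Type*}
    [∀ p, Zero (ιI' p)] [∀ p, Zero (ιO' p)] [∀ p, Zero (ιI'' p)] [∀ p, Zero (ιO'' p)]
    {t : ∀ p, ιI' p × ιO' p} {s : ∀ p, ιI'' p × ιO'' p} {p q : Fin 2}
    (htp : InTypeAt t p) (hsq : InTypeAt s q) (hsp : IncludesOutAt s p)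
    (htq : IncludesOutAt t q) :
    (AtoBSig t ∧ BtoASig s) ∨ (BtoASig t ∧ AtoBSig s) := by
  fin_cases p <;> fin_cases q
  · exact absurd hsq.2 hsp
  · exact .inr ⟨⟨htq, htp⟩, ⟨hsp, hsq⟩⟩
  · exact .inl ⟨⟨htq, htp⟩, ⟨hsp, hsq⟩⟩
  · exact absurd hsq.2 hsp

variable {I' O' I'' O'' : Fin 2 → Type*}
  [∀ p, Fintype (I' p)] [∀ p, DecidableEq (I' p)]
  [∀ p, Fintype (O' p)] [∀ p, DecidableEq (O' p)]
  [∀ p, Fintype (I'' p)] [∀ p, DecidableEq (I'' p)]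
  [∀ p, Fintype (O'' p)] [∀ p, DecidableEq (O'' p)]
  {ιI' ιO' ιI'' ιO'' : Fin 2 → Type*}
  [∀ p, Fintype (ιI' p)] [∀ p, Zero (ιI' p)]
  [∀ p, Fintype (ιO' p)] [∀ p, Zero (ιO' p)]
  [∀ p, Fintype (ιI'' p)] [∀ p, Zero (ιI'' p)]
  [∀ p, Fintype (ιO'' p)] [∀ p, Zero (ιO'' p)]

section Statement7

theorem statement7_general
    (σI' : ∀ p, ιI' p → Matrix (I' p) (I' p) ℂ)
    (σO' : ∀ p, ιO' p → Matrix (O' p) (O' p) ℂ)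
    (σI'' : ∀ p, ιI'' p → Matrix (I'' p) (I'' p) ℂ)
    (σO'' : ∀ p, ιO'' p → Matrix (O'' p) (O'' p) ℂ)
    (W : Matrix ((p : Fin 2) → I' p × O' p) ((p : Fin 2) → I' p × O' p) ℂ)
    (Z : Matrix ((p : Fin 2) → I'' p × O'' p) ((p : Fin 2) → I'' p × O'' p) ℂ)
    (w : (∀ p, ιI' p × ιO' p) → ℝ) (z : (∀ p, ιI'' p × ιO'' p) → ℝ)
    (hW : IsProcessWith σI' σO' W w) (hZ : IsProcessWith σI'' σO'' Z z)
    (hnot : ¬ IsProcess (fun p => prodBasis (σI' p) (σI'' p))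
        (fun p => prodBasis (σO' p) (σO'' p)) (prodOp W Z)) :
    (∃ (t : ∀ p, ιI' p × ιO' p) (s : ∀ p, ιI'' p × ιO'' p),
        w t ≠ 0 ∧ z s ≠ 0 ∧ NontrivialTerm t ∧ NontrivialTerm s ∧
        ((AtoBSig t ∧ BtoASig s) ∨ (BtoASig t ∧ AtoBSig s))) ∧
    (∃ t, w t ≠ 0 ∧ (AtoBSig t ∨ BtoASig t)) ∧
    (∃ s, z s ≠ 0 ∧ (AtoBSig s ∨ BtoASig s)) ∧
    ((∃ t, w t ≠ 0 ∧ AtoBSig t) ∨ (∃ s, z s ≠ 0 ∧ AtoBSig s)) ∧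
    ((∃ t, w t ≠ 0 ∧ BtoASig t) ∨ (∃ s, z s ≠ 0 ∧ BtoASig s)) := by
  obtain ⟨t, s, hwt, hzs, hts, hno⟩ :=
    exists_combineTerm_of_not_ogCoeffs_prodCoeffs fun h => hnot ⟨_, hW.prodOp hZ h⟩
  obtain ⟨ht, hs, p, q, htp, hsq, hsp, htq⟩ :=
    exists_inTypeAt_includesOutAt_of_combineTerm hW.2.2.2 hZ.2.2.2 hwt hzs hts hno
  rcases signalling_of_inTypeAt_includesOutAt htp hsq hsp htq with ⟨htAB, hsBA⟩ | ⟨htBA, hsAB⟩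
  · exact ⟨⟨t, s, hwt, hzs, ht, hs, .inl ⟨htAB, hsBA⟩⟩, ⟨t, hwt, .inl htAB⟩,
      ⟨s, hzs, .inr hsBA⟩, .inl ⟨t, hwt, htAB⟩, .inr ⟨s, hzs, hsBA⟩⟩
  · exact ⟨⟨t, s, hwt, hzs, ht, hs, .inr ⟨htBA, hsAB⟩⟩, ⟨t, hwt, .inr htBA⟩,
      ⟨s, hzs, .inl hsAB⟩, .inr ⟨s, hzs, hsAB⟩, .inl ⟨t, hwt, htBA⟩⟩

/-- **Necessity direction of the two-party corollary.** Let `W` and `Z` be two-party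
processes on parties `A', B'` and `A'', B''` respectively (with Hilbert–Schmidt
coefficients `w`, `z`; party `0` is the `A`-type party and party `1` the `B`-type
party) such that `P = W ⊗ Z` is not a valid process for the combined parties
`A = A'A''`, `B = B'B''`. Then there exist a nonzero nontrivial term of `W` and a
nonzero nontrivial term of `Z` which are signalling terms of opposite directions; in
particular both `W` and `Z` contain signalling terms, and the terms of `W` and `Z`
put together contain signalling terms of both directions. -/
theorem statement7
    (σI' : ∀ p, ιI' p → Matrix (I' p) (I' p) ℂ)
    (σO' : ∀ p, ιO' p → Matrix (O' p) (O' p) ℂ)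
    (σI'' : ∀ p, ιI'' p → Matrix (I'' p) (I'' p) ℂ)
    (σO'' : ∀ p, ιO'' p → Matrix (O'' p) (O'' p) ℂ)
    (hσI' : ∀ p, IsHSBasis (σI' p)) (hσO' : ∀ p, IsHSBasis (σO' p))
    (hσI'' : ∀ p, IsHSBasis (σI'' p)) (hσO'' : ∀ p, IsHSBasis (σO'' p))
    (W : Matrix ((p : Fin 2) → I' p × O' p) ((p : Fin 2) → I' p × O' p) ℂ)
    (Z : Matrix ((p : Fin 2) → I'' p × O'' p) ((p : Fin 2) → I'' p × O'' p) ℂ)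
    (w : (∀ p, ιI' p × ιO' p) → ℝ) (z : (∀ p, ιI'' p × ιO'' p) → ℝ)
    (hW : IsProcessWith σI' σO' W w) (hZ : IsProcessWith σI'' σO'' Z z)
    (hnot : ¬ IsProcess (fun p => prodBasis (σI' p) (σI'' p))
        (fun p => prodBasis (σO' p) (σO'' p)) (prodOp W Z)) :
    (∃ (t : ∀ p, ιI' p × ιO' p) (s : ∀ p, ιI'' p × ιO'' p),
        w t ≠ 0 ∧ z s ≠ 0 ∧ NontrivialTerm t ∧ NontrivialTerm s ∧
        ((AtoBSig t ∧ BtoASig s) ∨ (BtoASig t ∧ AtoBSig s))) ∧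
    (∃ t, w t ≠ 0 ∧ (AtoBSig t ∨ BtoASig t)) ∧
    (∃ s, z s ≠ 0 ∧ (AtoBSig s ∨ BtoASig s)) ∧
    ((∃ t, w t ≠ 0 ∧ AtoBSig t) ∨ (∃ s, z s ≠ 0 ∧ AtoBSig s)) ∧
    ((∃ t, w t ≠ 0 ∧ BtoASig t) ∨ (∃ s, z s ≠ 0 ∧ BtoASig s)) :=
  statement7_general σI' σO' σI'' σO'' W Z w z hW hZ hnot

end Statement7

end ProcessPaper
end
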